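/- Multiplicativity of the weight function: for centred Catalan sets S1, S2 and any integer l ≥ 1, w_l(S1 ∘ S2) = w_l(S1) · w_{l+2|S1|-2}(S2), where w_l(S) denotes the number of (|S|-1, l)-AS-trapezoids with associated centred Catalan set S. -/

import Mathlib

open Finset

/-- `S` is a centred Catalan set of size `n`: an `n`-subset of `{-n+1,…,n-1}` with
`|S ∩ {-i,…,i}| ≥ i+1` for all `0 ≤ i ≤ n-1`. -/
def IsCCS (n : ℕ) (S : Finset ℤ) : Prop :=
  S.card = n ∧ (∀ x ∈ S, -(n : ℤ) + 1 ≤ x ∧ x ≤ (n : ℤ) - 1) ∧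
  ∀ i : ℕ, i ≤ n - 1 → (i : ℤ) + 1 ≤ ((S ∩ Finset.Icc (-(i : ℤ)) (i : ℤ)).card : ℤ)

/-- The dilation operator `s_l`. -/
def dil (l : ℤ) (x : ℤ) : ℤ := if 0 < x then x + l else if x = 0 then 0 else x - l

/-- Concatenation `S1 ∘ S2 = S1 ∪ s_{|S1|-1}(S2)` of centred Catalan sets. -/
def ccsConcat (S1 S2 : Finset ℤ) : Finset ℤ := S1 ∪ S2.image (dil ((S1.card : ℤ) - 1))

/-- A Dyck path: steps `±1`, nonnegative partial sums, total sum `0`. -/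
def IsDyck (L : List ℤ) : Prop :=
  (∀ x ∈ L, x = 1 ∨ x = -1) ∧ (∀ k, 0 ≤ (L.take k).sum) ∧ L.sum = 0

/-- The `p`-th integer in the reading order `0, -1, 1, -2, 2, …, -n+1, n-1, n`. -/
def readOrder (n : ℕ) (p : ℕ) : ℤ :=
  if p = 2 * n - 1 then (n : ℤ)
  else if p % 2 = 1 then -(((p + 1) / 2 : ℕ) : ℤ) else ((p / 2 : ℕ) : ℤ)

/-- The Dyck path `D(S)` associated with a centred Catalan set `S` of size `n`. -/
def toDyck (n : ℕ) (S : Finset ℤ) : List ℤ :=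
  (List.range (2 * n)).map fun p => if readOrder n p ∈ S then (1 : ℤ) else -1

/-- A Motzkin path: steps in `{-1,0,1}`, nonnegative partial sums, total sum `0`. -/
def IsMotzkin (L : List ℤ) : Prop :=
  (∀ x ∈ L, x = -1 ∨ x = 0 ∨ x = 1) ∧ (∀ k, 0 ≤ (L.take k).sum) ∧ L.sum = 0

/-- The Motzkin path `M(S)` of a centred Catalan set `S` of size `n`:
its `i`-th step is `|{-i,i} ∩ S| - 1`. -/
def motz (n : ℕ) (S : Finset ℤ) : List ℤ :=
  (List.range (n - 1)).map fun k =>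
    ((S ∩ ({-((k : ℤ) + 1), (k : ℤ) + 1} : Finset ℤ)).card : ℤ) - 1

/-- The area enclosed between a Motzkin path and the x-axis
(sum of the trapezoid areas `(h_{j-1}+h_j)/2`, which for a path returning to the
x-axis equals the sum of the heights `h_0, …, h_{len-1}`). -/
def marea (L : List ℤ) : ℤ := ∑ j ∈ Finset.range L.length, (L.take j).sum

/-- In every row, consecutive nonzero entries alternate in sign. -/
def RowAlt (A : ℤ → ℤ → ℤ) : Prop :=
  ∀ i j1 j2, j1 < j2 → A i j1 ≠ 0 → A i j2 ≠ 0 →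
    (∀ j, j1 < j → j < j2 → A i j = 0) → A i j1 = -A i j2

/-- In every column, consecutive nonzero entries alternate in sign. -/
def ColAlt (A : ℤ → ℤ → ℤ) : Prop :=
  ∀ j i1 i2, i1 < i2 → A i1 j ≠ 0 → A i2 j ≠ 0 →
    (∀ i, i1 < i → i < i2 → A i j = 0) → A i1 j = -A i2 j

/-- In every column, the first nonzero entry from the top (rows are numbered from
the bottom, so the entry with the largest row index) is `1`. -/
def ColTopPos (A : ℤ → ℤ → ℤ) : Prop :=
  ∀ i j, A i j ≠ 0 → (∀ i', i < i' → A i' j = 0) → A i j = 1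

/-- An alternating sign triangle of order `n`, encoded as `A : ℤ → ℤ → ℤ` where
`A i j` is the entry in row `i` (from the bottom, `1 ≤ i ≤ n`) and column `j`
(`-i+1 ≤ j ≤ i-1`), with value `0` outside this range. -/
def IsAST (n : ℕ) (A : ℤ → ℤ → ℤ) : Prop :=
  (∀ i j, A i j ≠ 0 → 1 ≤ i ∧ i ≤ (n : ℤ) ∧ -i + 1 ≤ j ∧ j ≤ i - 1) ∧
  (∀ i j, A i j = -1 ∨ A i j = 0 ∨ A i j = 1) ∧
  (∀ i : ℤ, 1 ≤ i → i ≤ (n : ℤ) → ∑ j ∈ Finset.Icc (-i + 1) (i - 1), A i j = 1) ∧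
  RowAlt A ∧ ColAlt A ∧ ColTopPos A

/-- The set of column labels of an AST of order `n` with positive column-sum. -/
noncomputable def astCols (n : ℕ) (A : ℤ → ℤ → ℤ) : Finset ℤ :=
  (Finset.Icc (-(n : ℤ) + 1) ((n : ℤ) - 1)).filter fun j =>
    0 < ∑ i ∈ Finset.Icc (1 : ℤ) (n : ℤ), A i j

/-- An `(n,l)`-alternating sign trapezoid, encoded as `A : ℤ → ℤ → ℤ` where
`A i j` is the entry in row `i` (from the bottom, `1 ≤ i ≤ n`) and column `j`
(`-i+1 ≤ j ≤ l+i-1`), with value `0` outside this range. -/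
def IsASTrap (n l : ℕ) (A : ℤ → ℤ → ℤ) : Prop :=
  (∀ i j, A i j ≠ 0 → 1 ≤ i ∧ i ≤ (n : ℤ) ∧ -i + 1 ≤ j ∧ j ≤ (l : ℤ) + i - 1) ∧
  (∀ i j, A i j = -1 ∨ A i j = 0 ∨ A i j = 1) ∧
  (∀ i : ℤ, 1 ≤ i → i ≤ (n : ℤ) →
    ∑ j ∈ Finset.Icc (-i + 1) ((l : ℤ) + i - 1), A i j = 1) ∧
  (∀ j : ℤ, 1 ≤ j → j ≤ (l : ℤ) - 1 → ∑ i ∈ Finset.Icc (1 : ℤ) (n : ℤ), A i j = 0) ∧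
  RowAlt A ∧ ColAlt A ∧ ColTopPos A

/-- The centred Catalan set `S(A)` associated with an `(n,l)`-AS-trapezoid `A`:
take the columns with positive column-sum, subtract `1` from nonpositive labels,
subtract `l-1` from positive labels, and adjoin `0`. -/
noncomputable def trapCat (n l : ℕ) (A : ℤ → ℤ → ℤ) : Finset ℤ :=
  insert 0
    (((Finset.Icc (-(n : ℤ) + 1) ((l : ℤ) + n - 1)).filter
        (fun j => 0 < ∑ i ∈ Finset.Icc (1 : ℤ) (n : ℤ), A i j)).image
      fun j => if j ≤ 0 then j - 1 else j - ((l : ℤ) - 1))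

/-- `wS n l S`: the number of `(n,l)`-AS-trapezoids with associated centred
Catalan set `S`. -/
noncomputable def wS (n l : ℕ) (S : Finset ℤ) : ℕ :=
  Nat.card {A : ℤ → ℤ → ℤ // IsASTrap n l A ∧ trapCat n l A = S}

/-- `wM n l M`: the number of `(n,l)`-AS-trapezoids whose associated Motzkin path
is `M`. -/
noncomputable def wM (n l : ℕ) (M : List ℤ) : ℕ :=
  Nat.card {A : ℤ → ℤ → ℤ // IsASTrap n l A ∧ motz (n + 1) (trapCat n l A) = M}

/-- Placing the trapezoid `A2` centred above the `n1`-row trapezoid `A1`. -/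
def stack (n1 : ℕ) (A1 A2 : ℤ → ℤ → ℤ) : ℤ → ℤ → ℤ :=
  fun i j => if i ≤ (n1 : ℤ) then A1 i j else A2 (i - n1) (j + n1)

section Helpers

lemma sum_Icc_split (f : ℤ → ℤ) {a b c : ℤ} (h1 : a ≤ b + 1) (h2 : b ≤ c) :
    ∑ i ∈ Icc a c, f i = ∑ i ∈ Icc a b, f i + ∑ i ∈ Icc (b+1) c, f i := by
  rw [← Finset.sum_union]
  · congr 1; ext x; simp only [mem_union, mem_Icc]; omega
  · rw [Finset.disjoint_left]; intro x hx hy; simp only [mem_Icc] at hx hy; omega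

lemma sum_Icc_shift (f : ℤ → ℤ) (a b c : ℤ) :
    ∑ j ∈ Icc a b, f (j + c) = ∑ j ∈ Icc (a+c) (b+c), f j := by
  rw [← Finset.map_add_right_Icc, Finset.sum_map]; rfl

lemma colQ (n : ℕ) (A : ℤ → ℤ → ℤ) (hsupp : ∀ i j, A i j ≠ 0 → i ≤ (n:ℤ))
    (hca : ColAlt A) (hct : ColTopPos A) (j : ℤ) :
    ∀ m : ℤ, (∑ i ∈ Icc m n, A i j = 0 ∨ ∑ i ∈ Icc m n, A i j = 1) ∧
    (∀ i, i < m → A i j ≠ 0 → (∀ i', i < i' → i' < m → A i' j = 0) →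
      A i j = 1 - 2 * ∑ i'' ∈ Icc m n, A i'' j) := by
  have base : ∀ m : ℤ, (n:ℤ) < m → (∑ i ∈ Icc m n, A i j = 0 ∨ ∑ i ∈ Icc m n, A i j = 1) ∧
      (∀ i, i < m → A i j ≠ 0 → (∀ i', i < i' → i' < m → A i' j = 0) →
        A i j = 1 - 2 * ∑ i'' ∈ Icc m n, A i'' j) := by
    intro m hm
    have he : Icc m (n:ℤ) = ∅ := Finset.Icc_eq_empty (by omega)
    rw [he]
    refine ⟨Or.inl (by simp), fun i hi hne hgap => ?_⟩
    simp only [Finset.sum_empty]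
    have := hct i j hne (fun i' hi' => by
      by_cases h : i' < m
      · exact hgap i' hi' h
      · by_contra hc; exact absurd (hsupp i' j hc) (by omega))
    omega
  intro m
  by_cases hm : (n:ℤ) < m
  · exact base m hm
  · push_neg at hm
    refine Int.le_induction_down (m := (n:ℤ)+1)
      (motive := fun m _ => (∑ i ∈ Icc m (n:ℤ), A i j = 0 ∨ ∑ i ∈ Icc m (n:ℤ), A i j = 1) ∧
        (∀ i, i < m → A i j ≠ 0 → (∀ i', i < i' → i' < m → A i' j = 0) →
          A i j = 1 - 2 * ∑ i'' ∈ Icc m (n:ℤ), A i'' j))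
      (base ((n:ℤ)+1) (by omega)) ?_ m (by omega)
    intro s hs ih
    have hstep : ∑ i ∈ Icc (s-1) (n:ℤ), A i j = A (s-1) j + ∑ i ∈ Icc s (n:ℤ), A i j := by
      rw [sum_Icc_split (fun i => A i j) (b := s-1) (by omega) (by omega)]
      simp
    by_cases hz : A (s-1) j = 0
    · constructor
      · rw [hstep, hz, zero_add]; exact ih.1
      · intro i hi hne hgap
        rw [hstep, hz, zero_add]
        exact ih.2 i (by omega) hne (fun i' ha hb => by
          by_cases h : i' = s - 1
          · rw [h]; exact hz
          · exact hgap i' ha (by omega))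
    · have hv : A (s-1) j = 1 - 2 * ∑ i ∈ Icc s (n:ℤ), A i j :=
        ih.2 (s-1) (by omega) hz (fun i' ha hb => by omega)
      constructor
      · rw [hstep, hv]; rcases ih.1 with h | h <;> rw [h] <;> simp
      · intro i hi hne hgap
        have halt : A i j = -A (s-1) j :=
          hca j i (s-1) (by omega) hne hz (fun i' ha hb => hgap i' ha (by omega))
        rw [halt, hstep, hv]; ring

lemma ccs_zero_mem {n : ℕ} {S : Finset ℤ} (h : IsCCS n S) : 0 ∈ S := by
  have h3 := h.2.2 0 (by omega)
  have : (S ∩ Icc (-(0:ℤ)) 0).Nonempty := by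
    rw [← Finset.card_pos]
    push_cast at h3
    omega
  obtain ⟨x, hx⟩ := this
  rw [Finset.mem_inter, Finset.mem_Icc] at hx
  have : x = 0 := by omega
  exact this ▸ hx.1

lemma dil_inj {c : ℤ} (hc : 0 ≤ c) : Function.Injective (dil c) := by
  intro x y h; unfold dil at h; split_ifs at h <;> omega

lemma dil_big {c x : ℤ} (hc : 0 ≤ c) (hx : x ≠ 0) : dil c x ≤ -c-1 ∨ c+1 ≤ dil c x := by
  unfold dil; split_ifs <;> omega

lemma mem_trapCat (n l : ℕ) (A : ℤ → ℤ → ℤ) (x : ℤ) :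
    x ∈ trapCat n l A ↔ x = 0 ∨ ∃ j, (-(n:ℤ)+1 ≤ j ∧ j ≤ (l:ℤ)+n-1) ∧
      0 < ∑ i ∈ Icc (1:ℤ) (n:ℤ), A i j ∧ (if j ≤ 0 then j-1 else j-((l:ℤ)-1)) = x := by
  simp only [trapCat, Finset.mem_insert, Finset.mem_image, Finset.mem_filter, Finset.mem_Icc]
  constructor
  · rintro (h | ⟨j, ⟨⟨ha, hb⟩, hc⟩, hd⟩)
    · exact Or.inl h
    · exact Or.inr ⟨j, ⟨ha, hb⟩, hc, hd⟩
  · rintro (h | ⟨j, ⟨ha, hb⟩, hc, hd⟩)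
    · exact Or.inl h
    · exact Or.inr ⟨j, ⟨⟨ha, hb⟩, hc⟩, hd⟩

lemma concat_card {n1 n2 : ℕ} {S1 S2 : Finset ℤ}
    (h1 : IsCCS (n1+1) S1) (h2 : IsCCS (n2+1) S2) :
    (ccsConcat S1 S2).card = n1+n2+1 := by
  have hc1 : S1.card = n1 + 1 := h1.1
  have hc2 : S2.card = n2 + 1 := h2.1
  have hd : ((S1.card : ℤ) - 1) = (n1 : ℤ) := by rw [hc1]; push_cast; ring
  have hb1 : ∀ x ∈ S1, -(n1:ℤ) ≤ x ∧ x ≤ (n1:ℤ) := by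
    intro x hx; have := h1.2.1 x hx; push_cast at this ⊢; omega
  have hinter : S1 ∩ S2.image (dil ((S1.card : ℤ) - 1)) = {0} := by
    ext x
    simp only [Finset.mem_inter, Finset.mem_image, Finset.mem_singleton]
    constructor
    · rintro ⟨hx1, y, hy, hxy⟩
      by_contra hne
      have hy0 : y ≠ 0 := by rintro rfl; simp [dil] at hxy; exact hne hxy.symm
      have := dil_big (c := (S1.card:ℤ)-1) (by rw [hd]; positivity) hy0
      rw [hxy, hd] at this
      have := hb1 x hx1
      omega
    · rintro rfl
      exact ⟨ccs_zero_mem h1, 0, ccs_zero_mem h2, by simp [dil]⟩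
  have himg : (S2.image (dil ((S1.card : ℤ) - 1))).card = n2 + 1 := by
    rw [Finset.card_image_of_injective _ (dil_inj (by rw [hd]; positivity)), hc2]
  have := Finset.card_union_add_card_inter S1 (S2.image (dil ((S1.card : ℤ) - 1)))
  rw [hinter, himg] at this
  simp only [Finset.card_singleton] at this
  unfold ccsConcat
  omega

end Helpers

def cut1 (n1 : ℕ) (A : ℤ → ℤ → ℤ) : ℤ → ℤ → ℤ := fun i j => if i ≤ (n1:ℤ) then A i j else 0
def cut2 (n1 : ℕ) (A : ℤ → ℤ → ℤ) : ℤ → ℤ → ℤ := fun i j => if 0 < i then A (i + n1) (j - n1) else 0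

lemma cut1_low {n1 : ℕ} {A : ℤ → ℤ → ℤ} {i j : ℤ} (h : i ≤ (n1:ℤ)) : cut1 n1 A i j = A i j := if_pos h
lemma cut1_high {n1 : ℕ} {A : ℤ → ℤ → ℤ} {i j : ℤ} (h : ¬ i ≤ (n1:ℤ)) : cut1 n1 A i j = 0 := if_neg h
lemma cut2_pos {n1 : ℕ} {A : ℤ → ℤ → ℤ} {i j : ℤ} (h : 0 < i) : cut2 n1 A i j = A (i+n1) (j-n1) := if_pos h
lemma cut2_neg {n1 : ℕ} {A : ℤ → ℤ → ℤ} {i j : ℤ} (h : ¬ 0 < i) : cut2 n1 A i j = 0 := if_neg h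

lemma fwd (l n1 n2 : ℕ) (hl : 1 ≤ l) (S1 S2 : Finset ℤ)
    (h1 : IsCCS (n1+1) S1) (h2 : IsCCS (n2+1) S2)
    (A : ℤ → ℤ → ℤ) (hA : IsASTrap (n1+n2) l A)
    (hS : trapCat (n1+n2) l A = ccsConcat S1 S2) :
    (IsASTrap n1 l (cut1 n1 A) ∧ trapCat n1 l (cut1 n1 A) = S1) ∧
    (IsASTrap n2 (l+2*n1) (cut2 n1 A) ∧ trapCat n2 (l+2*n1) (cut2 n1 A) = S2) := by
  obtain ⟨hsupp, hval, hrow, hcol, hra, hca, hct⟩ := hA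
  have hQ := colQ (n1+n2) A (fun i j h => (hsupp i j h).2.1) hca hct
  have hd : ((S1.card : ℤ) - 1) = (n1 : ℤ) := by rw [h1.1]; push_cast; ring
  have hS1b : ∀ x ∈ S1, -(n1:ℤ) ≤ x ∧ x ≤ (n1:ℤ) := by
    intro x hx; have := h1.2.1 x hx; push_cast at this; omega
  have hSin : ∀ x, x ∈ ccsConcat S1 S2 ↔ x ∈ S1 ∨ ∃ y ∈ S2, dil (n1:ℤ) y = x := by
    intro x; rw [ccsConcat, Finset.mem_union, Finset.mem_image]
    constructor
    · rintro (h | ⟨y, hy, hxy⟩)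
      · exact Or.inl h
      · rw [hd] at hxy; exact Or.inr ⟨y, hy, hxy⟩
    · rintro (h | ⟨y, hy, hxy⟩)
      · exact Or.inl h
      · rw [← hd] at hxy; exact Or.inr ⟨y, hy, hxy⟩
  have hSmem : ∀ x, x ∈ trapCat (n1+n2) l A ↔ x ∈ S1 ∨ ∃ y ∈ S2, dil (n1:ℤ) y = x := by
    intro x; rw [hS]; exact hSin x
  have hc01 : ∀ j : ℤ, (∑ i ∈ Icc (1:ℤ) ((n1+n2:ℕ):ℤ), A i j = 0
      ∨ ∑ i ∈ Icc (1:ℤ) ((n1+n2:ℕ):ℤ), A i j = 1) := fun j => (hQ j 1).1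
  have ht01 : ∀ j : ℤ, (∑ i ∈ Icc ((n1:ℤ)+1) ((n1+n2:ℕ):ℤ), A i j = 0
      ∨ ∑ i ∈ Icc ((n1:ℤ)+1) ((n1+n2:ℕ):ℤ), A i j = 1) := fun j => (hQ j ((n1:ℤ)+1)).1
  have hsplitc : ∀ j : ℤ, ∑ i ∈ Icc (1:ℤ) ((n1+n2:ℕ):ℤ), A i j
      = (∑ i ∈ Icc (1:ℤ) (n1:ℤ), A i j) + ∑ i ∈ Icc ((n1:ℤ)+1) ((n1+n2:ℕ):ℤ), A i j :=
    fun j => sum_Icc_split _ (by omega) (by push_cast; omega)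
  have hb0 : ∀ j : ℤ, (j ≤ -(n1:ℤ) ∨ (l:ℤ)+n1 ≤ j) → ∑ i ∈ Icc (1:ℤ) (n1:ℤ), A i j = 0 := by
    intro j hj
    apply Finset.sum_eq_zero
    intro i hi
    rw [Finset.mem_Icc] at hi
    by_contra hc
    have := hsupp i j hc
    omega
  have hrowext : ∀ i : ℤ, 1 ≤ i → i ≤ ((n1+n2:ℕ):ℤ) → ∀ a b : ℤ, a ≤ -i+1 → (l:ℤ)+i-1 ≤ b →
      ∑ j ∈ Icc a b, A i j = 1 := by
    intro i hi1 hi2 a b ha hb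
    rw [← Finset.sum_subset (Finset.Icc_subset_Icc ha hb) ?_]
    · exact hrow i hi1 hi2
    · intro x _ hnx
      by_contra hc
      have := hsupp i x hc
      rw [Finset.mem_Icc] at hnx
      omega
  have htot : ∀ m : ℤ, 1 ≤ m → m ≤ ((n1+n2:ℕ):ℤ)+1 →
      ∑ j ∈ Icc (-((n1+n2:ℕ):ℤ)+1) ((l:ℤ)+((n1+n2:ℕ):ℤ)-1), ∑ i ∈ Icc m ((n1+n2:ℕ):ℤ), A i j
        = ((n1+n2:ℕ):ℤ)+1-m := by
    intro m hm1 hm2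
    rw [Finset.sum_comm]
    have hone : ∀ i ∈ Icc m ((n1+n2:ℕ):ℤ),
        ∑ j ∈ Icc (-((n1+n2:ℕ):ℤ)+1) ((l:ℤ)+((n1+n2:ℕ):ℤ)-1), A i j = 1 := by
      intro i hi
      rw [Finset.mem_Icc] at hi
      exact hrowext i (by omega) (by omega) _ _ (by omega) (by omega)
    rw [Finset.sum_congr rfl hone, Finset.sum_const, Int.card_Icc, nsmul_eq_mul, mul_one,
      Int.toNat_of_nonneg (by omega)]
  -- counting: outer columns
  have houtS : (ccsConcat S1 S2).filter (fun x => x ≤ -(n1:ℤ)-1 ∨ (n1:ℤ)+1 ≤ x)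
      = (S2.erase 0).image (dil (n1:ℤ)) := by
    ext x
    simp only [Finset.mem_filter, Finset.mem_image, Finset.mem_erase, hSin]
    constructor
    · rintro ⟨(hx | ⟨y, hy, rfl⟩), hbig⟩
      · have := hS1b x hx; omega
      · have hy0 : y ≠ 0 := by
          rintro rfl; simp [dil] at hbig; omega
        exact ⟨y, ⟨hy0, hy⟩, rfl⟩
    · rintro ⟨y, ⟨hy0, hy⟩, rfl⟩
      exact ⟨Or.inr ⟨y, hy, rfl⟩, by have := dil_big (c := (n1:ℤ)) (by positivity) hy0; omega⟩
  have hcardout : (((ccsConcat S1 S2).filter (fun x => x ≤ -(n1:ℤ)-1 ∨ (n1:ℤ)+1 ≤ x)).card : ℤ)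
      = (n2:ℤ) := by
    rw [houtS, Finset.card_image_of_injective _ (dil_inj (by positivity)),
      Finset.card_erase_of_mem (ccs_zero_mem h2), h2.1]
    push_cast
    omega
  have hbij : ((Icc (-((n1+n2:ℕ):ℤ)+1) ((l:ℤ)+((n1+n2:ℕ):ℤ)-1)).filter
        (fun j => (j ≤ -(n1:ℤ) ∨ (l:ℤ)+n1 ≤ j) ∧ 0 < ∑ i ∈ Icc (1:ℤ) ((n1+n2:ℕ):ℤ), A i j)).card
      = ((ccsConcat S1 S2).filter (fun x => x ≤ -(n1:ℤ)-1 ∨ (n1:ℤ)+1 ≤ x)).card := by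
    apply Finset.card_bij (fun j _ => if j ≤ 0 then j-1 else j-((l:ℤ)-1))
    · intro j hj
      simp only [Finset.mem_filter, Finset.mem_Icc] at hj
      obtain ⟨⟨hr1, hr2⟩, hout, hpos⟩ := hj
      refine Finset.mem_filter.mpr ⟨?_, ?_⟩
      · rw [← hS, mem_trapCat]
        exact Or.inr ⟨j, ⟨hr1, hr2⟩, hpos, rfl⟩
      · split_ifs <;> omega
    · intro a1 ha1 a2 ha2 heq
      simp only [Finset.mem_filter, Finset.mem_Icc] at ha1 ha2
      split_ifs at heq <;> omega
    · intro x hx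
      rw [Finset.mem_filter] at hx
      obtain ⟨hmem, hbig⟩ := hx
      rw [← hS, mem_trapCat] at hmem
      rcases hmem with rfl | ⟨j, ⟨hr1, hr2⟩, hpos, rfl⟩
      · omega
      · refine ⟨j, ?_, rfl⟩
        simp only [Finset.mem_filter, Finset.mem_Icc]
        refine ⟨⟨hr1, hr2⟩, ?_, hpos⟩
        by_cases hj0 : j ≤ 0
        · rw [if_pos hj0] at hbig
          omega
        · rw [if_neg hj0] at hbig
          rcases hbig with hb | hb
          · exfalso
            have hcentral := hcol j (by omega) (by omega)
            omega
          · omega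
  -- ∑ c over outer = n2, hence t vanishes on inner region
  have hcount : ∀ s : Finset ℤ,
      ∑ j ∈ s, (∑ i ∈ Icc (1:ℤ) ((n1+n2:ℕ):ℤ), A i j)
        = ((s.filter (fun j => 0 < ∑ i ∈ Icc (1:ℤ) ((n1+n2:ℕ):ℤ), A i j)).card : ℤ) := by
    intro s
    rw [← Finset.sum_filter_add_sum_filter_not s (fun j => 0 < ∑ i ∈ Icc (1:ℤ) ((n1+n2:ℕ):ℤ), A i j)]
    have hz : ∑ j ∈ s.filter (fun j => ¬ 0 < ∑ i ∈ Icc (1:ℤ) ((n1+n2:ℕ):ℤ), A i j),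
        (∑ i ∈ Icc (1:ℤ) ((n1+n2:ℕ):ℤ), A i j) = 0 := by
      apply Finset.sum_eq_zero
      intro j hj
      rw [Finset.mem_filter] at hj
      rcases hc01 j with h | h <;> omega
    have ho : ∑ j ∈ s.filter (fun j => 0 < ∑ i ∈ Icc (1:ℤ) ((n1+n2:ℕ):ℤ), A i j),
        (∑ i ∈ Icc (1:ℤ) ((n1+n2:ℕ):ℤ), A i j)
        = ∑ _j ∈ s.filter (fun j => 0 < ∑ i ∈ Icc (1:ℤ) ((n1+n2:ℕ):ℤ), A i j), (1:ℤ) := by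
      apply Finset.sum_congr rfl
      intro j hj
      rw [Finset.mem_filter] at hj
      rcases hc01 j with h | h <;> omega
    rw [hz, ho, Finset.sum_const, nsmul_eq_mul, mul_one, add_zero]
  have hfilter_eq : ((Icc (-((n1+n2:ℕ):ℤ)+1) ((l:ℤ)+((n1+n2:ℕ):ℤ)-1)).filter
        (fun j => j ≤ -(n1:ℤ) ∨ (l:ℤ)+n1 ≤ j)).filter
        (fun j => 0 < ∑ i ∈ Icc (1:ℤ) ((n1+n2:ℕ):ℤ), A i j)
      = (Icc (-((n1+n2:ℕ):ℤ)+1) ((l:ℤ)+((n1+n2:ℕ):ℤ)-1)).filter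
        (fun j => (j ≤ -(n1:ℤ) ∨ (l:ℤ)+n1 ≤ j) ∧ 0 < ∑ i ∈ Icc (1:ℤ) ((n1+n2:ℕ):ℤ), A i j) := by
    rw [Finset.filter_filter]
  have houtsum : ∑ j ∈ (Icc (-((n1+n2:ℕ):ℤ)+1) ((l:ℤ)+((n1+n2:ℕ):ℤ)-1)).filter
        (fun j => j ≤ -(n1:ℤ) ∨ (l:ℤ)+n1 ≤ j),
      (∑ i ∈ Icc (1:ℤ) ((n1+n2:ℕ):ℤ), A i j) = (n2:ℤ) := by
    rw [hcount, hfilter_eq, hbij, hcardout]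
  -- t agrees with c on outer
  have htc : ∀ j : ℤ, (j ≤ -(n1:ℤ) ∨ (l:ℤ)+n1 ≤ j) →
      ∑ i ∈ Icc ((n1:ℤ)+1) ((n1+n2:ℕ):ℤ), A i j = ∑ i ∈ Icc (1:ℤ) ((n1+n2:ℕ):ℤ), A i j := by
    intro j hj
    have := hsplitc j
    have := hb0 j hj
    omega
  have httot : ∑ j ∈ Icc (-((n1+n2:ℕ):ℤ)+1) ((l:ℤ)+((n1+n2:ℕ):ℤ)-1),
      ∑ i ∈ Icc ((n1:ℤ)+1) ((n1+n2:ℕ):ℤ), A i j = (n2:ℤ) := by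
    rw [htot ((n1:ℤ)+1) (by omega) (by push_cast; omega)]
    push_cast
    ring
  have htJ : ∀ j : ℤ, 1-(n1:ℤ) ≤ j → j ≤ (l:ℤ)+n1-1 →
      ∑ i ∈ Icc ((n1:ℤ)+1) ((n1+n2:ℕ):ℤ), A i j = 0 := by
    intro j hj1 hj2
    have hsplit := Finset.sum_filter_add_sum_filter_not
      (Icc (-((n1+n2:ℕ):ℤ)+1) ((l:ℤ)+((n1+n2:ℕ):ℤ)-1))
      (fun j => j ≤ -(n1:ℤ) ∨ (l:ℤ)+n1 ≤ j)
      (fun j => ∑ i ∈ Icc ((n1:ℤ)+1) ((n1+n2:ℕ):ℤ), A i j)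
    have houter_t : ∑ j ∈ (Icc (-((n1+n2:ℕ):ℤ)+1) ((l:ℤ)+((n1+n2:ℕ):ℤ)-1)).filter
          (fun j => j ≤ -(n1:ℤ) ∨ (l:ℤ)+n1 ≤ j),
        (∑ i ∈ Icc ((n1:ℤ)+1) ((n1+n2:ℕ):ℤ), A i j) = (n2:ℤ) := by
      rw [← houtsum]
      apply Finset.sum_congr rfl
      intro j' hj'
      rw [Finset.mem_filter] at hj'
      exact htc j' hj'.2
    have hinner0 : ∑ j ∈ (Icc (-((n1+n2:ℕ):ℤ)+1) ((l:ℤ)+((n1+n2:ℕ):ℤ)-1)).filter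
          (fun j => ¬(j ≤ -(n1:ℤ) ∨ (l:ℤ)+n1 ≤ j)),
        (∑ i ∈ Icc ((n1:ℤ)+1) ((n1+n2:ℕ):ℤ), A i j) = 0 := by
      rw [httot] at hsplit
      omega
    have hall0 := (Finset.sum_eq_zero_iff_of_nonneg (fun j' _ => by
        rcases ht01 j' with h | h <;> omega)).mp hinner0
    refine hall0 j ?_
    simp only [Finset.mem_filter, Finset.mem_Icc]
    constructor
    · push_cast; omega
    · push_cast; omega
  -- sums for the cut pieces
  have hcut1sum : ∀ j : ℤ, ∑ i ∈ Icc (1:ℤ) (n1:ℤ), cut1 n1 A i j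
      = ∑ i ∈ Icc (1:ℤ) (n1:ℤ), A i j := by
    intro j
    apply Finset.sum_congr rfl
    intro i hi
    rw [Finset.mem_Icc] at hi
    exact cut1_low hi.2
  have hcut2sum : ∀ j : ℤ, ∑ i ∈ Icc (1:ℤ) (n2:ℤ), cut2 n1 A i j
      = ∑ i ∈ Icc ((n1:ℤ)+1) ((n1+n2:ℕ):ℤ), A i (j - (n1:ℤ)) := by
    intro j
    have h := sum_Icc_shift (fun i => A i (j - (n1:ℤ))) 1 n2 n1
    calc ∑ i ∈ Icc (1:ℤ) (n2:ℤ), cut2 n1 A i j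
        = ∑ i ∈ Icc (1:ℤ) (n2:ℤ), A (i+(n1:ℤ)) (j-(n1:ℤ)) := by
          apply Finset.sum_congr rfl
          intro i hi
          rw [Finset.mem_Icc] at hi
          exact cut2_pos (by omega)
      _ = ∑ i ∈ Icc ((1:ℤ)+(n1:ℤ)) ((n2:ℤ)+(n1:ℤ)), A i (j-(n1:ℤ)) := h
      _ = ∑ i ∈ Icc ((n1:ℤ)+1) ((n1+n2:ℕ):ℤ), A i (j - (n1:ℤ)) := by
          congr 1 <;> push_cast <;> ring
  constructor
  · constructor
    · refine ⟨?_, ?_, ?_, ?_, ?_, ?_, ?_⟩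
      · -- support
        intro i j hne
        by_cases h : i ≤ (n1:ℤ)
        · rw [cut1_low h] at hne
          have := hsupp i j hne
          omega
        · rw [cut1_high h] at hne
          exact absurd rfl hne
      · intro i j
        by_cases h : i ≤ (n1:ℤ)
        · rw [cut1_low h]; exact hval i j
        · rw [cut1_high h]; tauto
      · -- row sums
        intro i hi1 hi2
        rw [Finset.sum_congr rfl (fun j _ => cut1_low hi2)]
        exact hrow i hi1 (by push_cast; omega)
      · -- central columns
        intro j hj1 hj2
        rw [hcut1sum j]
        have hc := hcol j hj1 hj2
        have ht := htJ j (by omega) (by omega)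
        have := hsplitc j
        omega
      · -- RowAlt
        intro i j1 j2 hlt hne1 hne2 hgap
        by_cases h : i ≤ (n1:ℤ)
        · rw [cut1_low h] at hne1 hne2 ⊢
          rw [cut1_low h]
          refine hra i j1 j2 hlt hne1 hne2 ?_
          intro j ha hb
          have := hgap j ha hb
          rwa [cut1_low h] at this
        · rw [cut1_high h] at hne1
          exact absurd rfl hne1
      · -- ColAlt
        intro j i1 i2 hlt hne1 hne2 hgap
        have h2' : i2 ≤ (n1:ℤ) := by
          by_contra hc
          rw [cut1_high hc] at hne2
          exact hne2 rfl
        have h1' : i1 ≤ (n1:ℤ) := by omega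
        rw [cut1_low h1'] at hne1 ⊢
        rw [cut1_low h2'] at hne2 ⊢
        refine hca j i1 i2 hlt hne1 hne2 ?_
        intro i ha hb
        have := hgap i ha hb
        rwa [cut1_low (by omega)] at this
      · -- ColTopPos
        intro i j hne htop
        have h : i ≤ (n1:ℤ) := by
          by_contra hc
          rw [cut1_high hc] at hne
          exact hne rfl
        rw [cut1_low h] at hne ⊢
        have hjJ := hsupp i j hne
        have ht := htJ j (by omega) (by omega)
        have := (hQ j ((n1:ℤ)+1)).2 i (by omega) hne ?_
        · omega
        · intro i' ha hb
          have := htop i' ha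
          rwa [cut1_low (by omega)] at this
    · -- trapCat cut1 = S1
      ext x
      rw [mem_trapCat]
      constructor
      · rintro (rfl | ⟨j, ⟨hr1, hr2⟩, hpos, rfl⟩)
        · exact ccs_zero_mem h1
        · push_cast at hr1 hr2
          rw [hcut1sum j] at hpos
          have ht := htJ j (by omega) (by omega)
          have hcp : 0 < ∑ i ∈ Icc (1:ℤ) ((n1+n2:ℕ):ℤ), A i j := by
            have := hsplitc j
            omega
          have hmem : (if j ≤ 0 then j-1 else j-((l:ℤ)-1)) ∈ trapCat (n1+n2) l A := by
            rw [mem_trapCat]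
            exact Or.inr ⟨j, ⟨by push_cast; omega, by push_cast; omega⟩, hcp, rfl⟩
          rw [hSmem] at hmem
          rcases hmem with hmemS | ⟨y, hy, hxy⟩
          · exact hmemS
          · -- impossible: the label lies in [-n1, n1] \ {0}
            exfalso
            have hxb : (-(n1:ℤ) ≤ (if j ≤ 0 then j-1 else j-((l:ℤ)-1)) ∧
                (if j ≤ 0 then j-1 else j-((l:ℤ)-1)) ≤ (n1:ℤ)) ∧
                (if j ≤ 0 then j-1 else j-((l:ℤ)-1)) ≠ 0 := by
              by_cases hj0 : j ≤ 0
              · rw [if_pos hj0]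
                constructor
                · omega
                · omega
              · rw [if_neg hj0]
                have : ¬ (j - ((l:ℤ)-1) ≤ 0) := by
                  by_contra hc
                  have hcentral := hcol j (by omega) (by omega)
                  have := hsplitc j
                  omega
                constructor
                · omega
                · omega
            by_cases hy0 : y = 0
            · rw [hy0] at hxy; simp [dil] at hxy; omega
            · have := dil_big (c := (n1:ℤ)) (by positivity) hy0
              omega
      · intro hx
        by_cases hx0 : x = 0
        · exact Or.inl hx0
        · right
          have hxS : x ∈ trapCat (n1+n2) l A := by
            rw [hSmem]; exact Or.inl hx
          rw [mem_trapCat] at hxS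
          rcases hxS with rfl | ⟨j, ⟨hr1, hr2⟩, hpos, rfl⟩
          · exact absurd rfl hx0
          · push_cast at hr1 hr2
            have hxb := hS1b _ hx
            have hjJ : 1-(n1:ℤ) ≤ j ∧ j ≤ (l:ℤ)+n1-1 := by
              by_cases hj0 : j ≤ 0
              · rw [if_pos hj0] at hxb
                omega
              · rw [if_neg hj0] at hxb hx0
                by_cases hcen : j ≤ (l:ℤ)-1
                · exfalso
                  have := hcol j (by omega) (by omega)
                  omega
                · omega
            have ht := htJ j hjJ.1 hjJ.2
            refine ⟨j, ⟨by push_cast; omega, by push_cast; omega⟩, ?_, rfl⟩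
            rw [hcut1sum j]
            have := hsplitc j
            omega
  · constructor
    · refine ⟨?_, ?_, ?_, ?_, ?_, ?_, ?_⟩
      · -- support
        intro i j hne
        have h : 0 < i := by
          by_contra hc
          rw [cut2_neg hc] at hne
          exact hne rfl
        rw [cut2_pos h] at hne
        have := hsupp _ _ hne
        push_cast at this ⊢
        omega
      · intro i j
        by_cases h : 0 < i
        · rw [cut2_pos h]; exact hval _ _
        · rw [cut2_neg h]; tauto
      · -- row sums
        intro i hi1 hi2
        push_cast at hi2
        rw [Finset.sum_congr rfl (fun j _ => cut2_pos (by omega))]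
        have hsh := sum_Icc_shift (fun j => A (i+(n1:ℤ)) j) (-i+1) (((l+2*n1:ℕ):ℤ)+i-1) (-(n1:ℤ))
        have heq : ∑ j ∈ Icc (-i+1) (((l+2*n1:ℕ):ℤ)+i-1), A (i+(n1:ℤ)) (j + -(n1:ℤ))
            = ∑ j ∈ Icc (-i+1) (((l+2*n1:ℕ):ℤ)+i-1), A (i+(n1:ℤ)) (j - (n1:ℤ)) :=
          Finset.sum_congr rfl (fun j _ => by rw [sub_eq_add_neg])
        rw [← heq, hsh]
        exact hrowext (i+(n1:ℤ)) (by omega) (by push_cast; omega)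
          (-i+1+ -(n1:ℤ)) (((l+2*n1:ℕ):ℤ)+i-1+ -(n1:ℤ)) (by push_cast; omega) (by push_cast; omega)
      · -- central columns
        intro j hj1 hj2
        rw [hcut2sum j]
        push_cast at hj2
        exact htJ (j - (n1:ℤ)) (by omega) (by omega)
      · -- RowAlt
        intro i j1 j2 hlt hne1 hne2 hgap
        have h : 0 < i := by
          by_contra hc
          rw [cut2_neg hc] at hne1
          exact hne1 rfl
        rw [cut2_pos h] at hne1 hne2 ⊢
        rw [cut2_pos h]
        refine hra (i+(n1:ℤ)) (j1-(n1:ℤ)) (j2-(n1:ℤ)) (by omega) hne1 hne2 ?_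
        intro j ha hb
        have := hgap (j + (n1:ℤ)) (by omega) (by omega)
        rw [cut2_pos h] at this
        rwa [show j + (n1:ℤ) - n1 = j from by ring] at this
      · -- ColAlt
        intro j i1 i2 hlt hne1 hne2 hgap
        have h1' : 0 < i1 := by
          by_contra hc
          rw [cut2_neg hc] at hne1
          exact hne1 rfl
        have h2' : 0 < i2 := by omega
        rw [cut2_pos h1'] at hne1 ⊢
        rw [cut2_pos h2'] at hne2 ⊢
        refine hca (j-(n1:ℤ)) (i1+(n1:ℤ)) (i2+(n1:ℤ)) (by omega) hne1 hne2 ?_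
        intro i ha hb
        have := hgap (i - (n1:ℤ)) (by omega) (by omega)
        rw [cut2_pos (by omega)] at this
        rwa [show i - (n1:ℤ) + n1 = i from by ring] at this
      · -- ColTopPos
        intro i j hne htop
        have h : 0 < i := by
          by_contra hc
          rw [cut2_neg hc] at hne
          exact hne rfl
        rw [cut2_pos h] at hne ⊢
        refine hct (i+(n1:ℤ)) (j-(n1:ℤ)) hne ?_
        intro i' hi'
        have := htop (i' - (n1:ℤ)) (by omega)
        rw [cut2_pos (by omega)] at this
        rwa [show i' - (n1:ℤ) + n1 = i' from by ring] at this
    · -- trapCat cut2 = S2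
      ext x
      rw [mem_trapCat]
      constructor
      · rintro (rfl | ⟨j, ⟨hr1, hr2⟩, hpos, rfl⟩)
        · exact ccs_zero_mem h2
        · push_cast at hr1 hr2
          rw [hcut2sum j] at hpos
          have hout : j ≤ 0 ∨ (l:ℤ)+2*n1 ≤ j := by
            by_contra hc
            push_neg at hc
            have := htJ (j - (n1:ℤ)) (by omega) (by omega)
            omega
          have hb := hb0 (j - (n1:ℤ)) (by omega)
          have hcp : 0 < ∑ i ∈ Icc (1:ℤ) ((n1+n2:ℕ):ℤ), A i (j-(n1:ℤ)) := by
            have := hsplitc (j - (n1:ℤ))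
            omega
          have hmem : (if j-(n1:ℤ) ≤ 0 then j-(n1:ℤ)-1 else j-(n1:ℤ)-((l:ℤ)-1))
              ∈ trapCat (n1+n2) l A := by
            rw [mem_trapCat]
            exact Or.inr ⟨j-(n1:ℤ), ⟨by push_cast; omega, by push_cast; omega⟩, hcp, rfl⟩
          rw [hSmem] at hmem
          rcases hmem with hmemS | ⟨y, hy, hxy⟩
          · exfalso
            have := hS1b _ hmemS
            split_ifs at this <;> omega
          · have hyx : y = (if j ≤ 0 then j-1 else j-(((l+2*n1:ℕ):ℤ)-1)) := by
              by_cases hy0 : y = 0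
              · exfalso
                rw [hy0] at hxy
                simp [dil] at hxy
                split_ifs at hxy <;> omega
              · unfold dil at hxy
                split_ifs at hxy <;> split_ifs <;> push_cast <;> omega
            rwa [← hyx]
      · intro hx
        by_cases hx0 : x = 0
        · exact Or.inl hx0
        · right
          have hdx : dil (n1:ℤ) x ∈ trapCat (n1+n2) l A := by
            rw [hSmem]; exact Or.inr ⟨x, hx, rfl⟩
          rw [mem_trapCat] at hdx
          have hbig := dil_big (c := (n1:ℤ)) (by positivity) hx0
          rcases hdx with hzero | ⟨j, ⟨hr1, hr2⟩, hpos, hlab⟩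
          · omega
          · push_cast at hr1 hr2
            have hout : j ≤ -(n1:ℤ) ∨ (l:ℤ)+n1 ≤ j := by
              by_cases hj0 : j ≤ 0
              · rw [if_pos hj0] at hlab
                left
                unfold dil at hlab
                split_ifs at hlab <;> omega
              · rw [if_neg hj0] at hlab
                by_cases hcen : j ≤ (l:ℤ)-1
                · exfalso
                  have := hcol j (by omega) (by omega)
                  omega
                · right
                  unfold dil at hlab
                  split_ifs at hlab <;> omega
            have hb := hb0 j hout
            have htcj : 0 < ∑ i ∈ Icc ((n1:ℤ)+1) ((n1+n2:ℕ):ℤ), A i j := by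
              have := hsplitc j
              omega
            refine ⟨j+(n1:ℤ), ⟨by push_cast; omega, by push_cast; omega⟩, ?_, ?_⟩
            · rw [hcut2sum (j+(n1:ℤ)), show j+(n1:ℤ)-(n1:ℤ) = j from by ring]
              exact htcj
            · unfold dil at hlab
              split_ifs at hlab <;> split_ifs <;> push_cast <;> omega


lemma stack_low (n1 : ℕ) (A1 A2 : ℤ → ℤ → ℤ) {i : ℤ} (h : i ≤ (n1:ℤ)) (j : ℤ) :
    stack n1 A1 A2 i j = A1 i j := if_pos h
lemma stack_high (n1 : ℕ) (A1 A2 : ℤ → ℤ → ℤ) {i : ℤ} (h : ¬ i ≤ (n1:ℤ)) (j : ℤ) :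
    stack n1 A1 A2 i j = A2 (i-n1) (j+n1) := if_neg h

lemma bwd (l n1 n2 : ℕ) (hl : 1 ≤ l) (S1 S2 : Finset ℤ)
    (h1 : IsCCS (n1+1) S1) (h2 : IsCCS (n2+1) S2)
    (A1 A2 : ℤ → ℤ → ℤ) (hA1 : IsASTrap n1 l A1) (hT1 : trapCat n1 l A1 = S1)
    (hA2 : IsASTrap n2 (l+2*n1) A2) (hT2 : trapCat n2 (l+2*n1) A2 = S2) :
    IsASTrap (n1+n2) l (stack n1 A1 A2) ∧ trapCat (n1+n2) l (stack n1 A1 A2) = ccsConcat S1 S2 := by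
  obtain ⟨hsupp1, hval1, hrow1, hcol1, hra1, hca1, hct1⟩ := hA1
  obtain ⟨hsupp2, hval2, hrow2, hcol2, hra2, hca2, hct2⟩ := hA2
  have hsupJ : ∀ i j, A1 i j ≠ 0 → 1-(n1:ℤ) ≤ j ∧ j ≤ (l:ℤ)+n1-1 := by
    intro i j h; have := hsupp1 i j h; omega
  have hb0 : ∀ j : ℤ, (j ≤ -(n1:ℤ) ∨ (l:ℤ)+n1 ≤ j) → ∑ i ∈ Icc (1:ℤ) (n1:ℤ), A1 i j = 0 := by
    intro j hj
    apply Finset.sum_eq_zero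
    intro i _
    by_contra hc
    have := hsupJ i j hc
    omega
  have hshift : ∀ y : ℤ, ∑ i ∈ Icc ((n1:ℤ)+1) ((n1:ℤ)+(n2:ℤ)), A2 (i-(n1:ℤ)) y
      = ∑ i ∈ Icc (1:ℤ) (n2:ℤ), A2 i y := by
    intro y
    have h := sum_Icc_shift (fun i => A2 (i - (n1:ℤ)) y) 1 n2 n1
    simp only [add_sub_cancel_right] at h
    rw [show Icc ((n1:ℤ)+1) ((n1:ℤ)+(n2:ℤ)) = Icc (1+(n1:ℤ)) ((n2:ℤ)+(n1:ℤ)) from by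
      congr 1 <;> ring]
    exact h.symm
  have hBcol : ∀ j : ℤ, ∑ i ∈ Icc (1:ℤ) (((n1+n2 : ℕ)):ℤ), stack n1 A1 A2 i j
      = (∑ i ∈ Icc (1:ℤ) (n1:ℤ), A1 i j) + ∑ i ∈ Icc (1:ℤ) (n2:ℤ), A2 i (j+(n1:ℤ)) := by
    intro j
    rw [show (((n1+n2 : ℕ)):ℤ) = (n1:ℤ)+(n2:ℤ) from by push_cast; ring]
    rw [sum_Icc_split (fun i => stack n1 A1 A2 i j) (b := (n1:ℤ)) (by omega) (by omega)]
    congr 1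
    · apply Finset.sum_congr rfl
      intro i hi
      rw [Finset.mem_Icc] at hi
      exact stack_low n1 A1 A2 hi.2 j
    · rw [← hshift (j + (n1:ℤ))]
      apply Finset.sum_congr rfl
      intro i hi
      rw [Finset.mem_Icc] at hi
      exact stack_high n1 A1 A2 (by omega) j
  have hcent2 : ∀ j' : ℤ, 1 ≤ j' → j' ≤ (l:ℤ)+2*n1-1 → ∑ i ∈ Icc (1:ℤ) (n2:ℤ), A2 i j' = 0 := by
    intro j' hj1 hj2
    exact hcol2 j' hj1 (by push_cast; omega)
  have hseam : ∀ j' i'' : ℤ, 1 ≤ j' → j' ≤ (l:ℤ)+2*n1-1 → A2 i'' j' ≠ 0 →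
      (∀ m, 0 < m → m < i'' → A2 m j' = 0) → A2 i'' j' = -1 := by
    intro j' i'' hj1 hj2 hne hgap
    have hQ := colQ n2 A2 (fun i j h => (hsupp2 i j h).2.1) hca2 hct2 j'
    have hi1 : 1 ≤ i'' := (hsupp2 _ _ hne).1
    have hi2 : i'' ≤ (n2:ℤ) := (hsupp2 _ _ hne).2.1
    have hc0 : ∑ i ∈ Icc (1:ℤ) (n2:ℤ), A2 i j' = 0 := hcent2 j' hj1 hj2
    have hsp : ∑ i ∈ Icc (1:ℤ) (n2:ℤ), A2 i j'
        = (∑ i ∈ Icc (1:ℤ) i'', A2 i j') + ∑ i ∈ Icc (i''+1) (n2:ℤ), A2 i j' :=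
      sum_Icc_split _ (by omega) hi2
    have hsingle : ∑ i ∈ Icc (1:ℤ) i'', A2 i j' = A2 i'' j' := by
      apply Finset.sum_eq_single_of_mem i'' (Finset.mem_Icc.mpr ⟨hi1, le_refl _⟩)
      intro b hb hbne
      rw [Finset.mem_Icc] at hb
      exact hgap b (by omega) (by omega)
    have hQ2 := (hQ (i''+1)).2 i'' (by omega) hne (fun i' ha hb => by omega)
    omega
  have hd : ((S1.card : ℤ) - 1) = (n1 : ℤ) := by rw [h1.1]; push_cast; ring
  constructor
  · refine ⟨?_, ?_, ?_, ?_, ?_, ?_, ?_⟩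
    · -- support
      intro i j hne
      by_cases h : i ≤ (n1:ℤ)
      · rw [stack_low n1 A1 A2 h j] at hne
        have := hsupp1 i j hne
        push_cast
        omega
      · rw [stack_high n1 A1 A2 h j] at hne
        have := hsupp2 _ _ hne
        push_cast at this ⊢
        omega
    · -- values
      intro i j
      by_cases h : i ≤ (n1:ℤ)
      · rw [stack_low n1 A1 A2 h j]; exact hval1 i j
      · rw [stack_high n1 A1 A2 h j]; exact hval2 _ _
    · -- row sums
      intro i hi1 hi2
      push_cast at hi2
      by_cases h : i ≤ (n1:ℤ)
      · rw [Finset.sum_congr rfl (fun j _ => stack_low n1 A1 A2 h j)]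
        exact hrow1 i hi1 h
      · rw [Finset.sum_congr rfl (fun j _ => stack_high n1 A1 A2 h j)]
        have hs := sum_Icc_shift (fun j => A2 (i - (n1:ℤ)) j) (-i+1) ((l:ℤ)+i-1) (n1:ℤ)
        rw [hs]
        have := hrow2 (i - (n1:ℤ)) (by omega) (by push_cast; omega)
        rw [show Finset.Icc (-i+1+(n1:ℤ)) ((l:ℤ)+i-1+(n1:ℤ))
            = Finset.Icc (-(i-(n1:ℤ))+1) (((l+2*n1 : ℕ):ℤ)+(i-(n1:ℤ))-1) from by
          congr 1 <;> push_cast <;> ring]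
        exact this
    · -- central column sums
      intro j hj1 hj2
      rw [hBcol j, hcol1 j hj1 hj2, hcent2 (j+(n1:ℤ)) (by omega) (by omega)]
      ring
    · -- RowAlt
      intro i j1 j2 hlt hne1 hne2 hgap
      by_cases h : i ≤ (n1:ℤ)
      · rw [stack_low n1 A1 A2 h j1] at hne1 ⊢
        rw [stack_low n1 A1 A2 h j2] at hne2 ⊢
        refine hra1 i j1 j2 hlt hne1 hne2 ?_
        intro j ha hb
        have := hgap j ha hb
        rwa [stack_low n1 A1 A2 h j] at this
      · rw [stack_high n1 A1 A2 h j1] at hne1 ⊢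
        rw [stack_high n1 A1 A2 h j2] at hne2 ⊢
        refine hra2 (i-(n1:ℤ)) (j1+n1) (j2+n1) (by omega) hne1 hne2 ?_
        intro j ha hb
        have := hgap (j - (n1:ℤ)) (by omega) (by omega)
        rw [stack_high n1 A1 A2 h (j - (n1:ℤ))] at this
        rwa [show j - (n1:ℤ) + n1 = j from by ring] at this
    · -- ColAlt
      intro j i1 i2 hlt hne1 hne2 hgap
      by_cases h2' : i2 ≤ (n1:ℤ)
      · have h1' : i1 ≤ (n1:ℤ) := by omega
        rw [stack_low n1 A1 A2 h1' j] at hne1 ⊢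
        rw [stack_low n1 A1 A2 h2' j] at hne2 ⊢
        refine hca1 j i1 i2 hlt hne1 hne2 ?_
        intro i ha hb
        have := hgap i ha hb
        rwa [stack_low n1 A1 A2 (by omega) j] at this
      · by_cases h1' : i1 ≤ (n1:ℤ)
        · rw [stack_low n1 A1 A2 h1' j] at hne1 ⊢
          rw [stack_high n1 A1 A2 h2' j] at hne2 ⊢
          have htopA1 : A1 i1 j = 1 := by
            refine hct1 i1 j hne1 ?_
            intro i' hi'
            by_cases hc : i' ≤ (n1:ℤ)
            · have := hgap i' hi' (by omega)
              rwa [stack_low n1 A1 A2 hc j] at this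
            · by_contra hcc
              have := hsupp1 i' j hcc
              omega
          have hjc := hsupp1 i1 j hne1
          have hbot : A2 (i2-(n1:ℤ)) (j+(n1:ℤ)) = -1 := by
            refine hseam (j+(n1:ℤ)) (i2-(n1:ℤ)) (by omega) (by omega) hne2 ?_
            intro m hm1 hm2
            have := hgap (m + (n1:ℤ)) (by omega) (by omega)
            rw [stack_high n1 A1 A2 (by omega) j] at this
            rwa [show m + (n1:ℤ) - n1 = m from by ring] at this
          rw [htopA1, hbot]
          norm_num
        · rw [stack_high n1 A1 A2 h1' j] at hne1 ⊢
          rw [stack_high n1 A1 A2 h2' j] at hne2 ⊢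
          refine hca2 (j+(n1:ℤ)) (i1-(n1:ℤ)) (i2-(n1:ℤ)) (by omega) hne1 hne2 ?_
          intro i ha hb
          have := hgap (i + (n1:ℤ)) (by omega) (by omega)
          rw [stack_high n1 A1 A2 (by omega) j] at this
          rwa [show i + (n1:ℤ) - n1 = i from by ring] at this
    · -- ColTopPos
      intro i j hne htop
      by_cases h : i ≤ (n1:ℤ)
      · rw [stack_low n1 A1 A2 h j] at hne ⊢
        refine hct1 i j hne ?_
        intro i' hi'
        by_cases hc : i' ≤ (n1:ℤ)
        · have := htop i' hi'
          rwa [stack_low n1 A1 A2 hc j] at this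
        · by_contra hcc
          have := hsupp1 i' j hcc
          omega
      · rw [stack_high n1 A1 A2 h j] at hne ⊢
        refine hct2 (i-(n1:ℤ)) (j+(n1:ℤ)) hne ?_
        intro i' hi'
        have := htop (i' + (n1:ℤ)) (by omega)
        rw [stack_high n1 A1 A2 (by omega) j] at this
        rwa [show i' + (n1:ℤ) - n1 = i' from by ring] at this
  · -- trapCat equality
    ext x
    rw [mem_trapCat]
    constructor
    · rintro (rfl | ⟨j, ⟨hr1, hr2⟩, hpos, rfl⟩)
      · exact Finset.mem_union.mpr (Or.inl (ccs_zero_mem h1))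
      · push_cast at hr1 hr2
        rw [hBcol j] at hpos
        by_cases hj : 1-(n1:ℤ) ≤ j ∧ j ≤ (l:ℤ)+n1-1
        · rw [hcent2 (j+(n1:ℤ)) (by omega) (by omega), add_zero] at hpos
          have hx1 : (if j ≤ 0 then j-1 else j-((l:ℤ)-1)) ∈ trapCat n1 l A1 := by
            rw [mem_trapCat]
            exact Or.inr ⟨j, ⟨by push_cast; omega, by push_cast; omega⟩, hpos, rfl⟩
          rw [hT1] at hx1
          exact Finset.mem_union.mpr (Or.inl hx1)
        · have hout : j ≤ -(n1:ℤ) ∨ (l:ℤ)+n1 ≤ j := by omega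
          rw [hb0 j hout, zero_add] at hpos
          have hx2 : (if j+(n1:ℤ) ≤ 0 then j+(n1:ℤ)-1 else j+(n1:ℤ)-(((l+2*n1:ℕ):ℤ)-1))
              ∈ trapCat n2 (l+2*n1) A2 := by
            rw [mem_trapCat]
            exact Or.inr ⟨j+(n1:ℤ), ⟨by push_cast; omega, by push_cast; omega⟩, hpos, rfl⟩
          rw [hT2] at hx2
          refine Finset.mem_union.mpr (Or.inr ?_)
          rw [Finset.mem_image]
          refine ⟨_, hx2, ?_⟩
          rw [hd]
          unfold dil
          split_ifs <;> push_cast at * <;> omega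
    · intro hx
      rcases Finset.mem_union.mp hx with hx1 | hx2
      · rw [← hT1, mem_trapCat] at hx1
        rcases hx1 with rfl | ⟨j, ⟨hr1, hr2⟩, hpos, rfl⟩
        · exact Or.inl rfl
        · push_cast at hr1 hr2
          refine Or.inr ⟨j, ⟨by push_cast; omega, by push_cast; omega⟩, ?_, rfl⟩
          rw [hBcol j, hcent2 (j+(n1:ℤ)) (by omega) (by omega), add_zero]
          exact hpos
      · rw [Finset.mem_image] at hx2
        obtain ⟨y, hy, rfl⟩ := hx2
        rw [← hT2, mem_trapCat] at hy
        rcases hy with rfl | ⟨j', ⟨hr1, hr2⟩, hpos, rfl⟩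
        · left
          rw [hd]
          simp [dil]
        · push_cast at hr1 hr2
          have hout : j' ≤ 0 ∨ (l:ℤ)+2*n1 ≤ j' := by
            by_contra hc
            push_neg at hc
            have := hcent2 j' (by omega) (by omega)
            omega
          refine Or.inr ⟨j' - (n1:ℤ), ⟨by push_cast; omega, by push_cast; omega⟩, ?_, ?_⟩
          · rw [hBcol, hb0 _ (by omega), zero_add, show j' - (n1:ℤ) + n1 = j' from by ring]
            exact hpos
          · rw [hd]
            unfold dil
            split_ifs <;> push_cast at * <;> omega


noncomputable def splitEquiv (l n1 n2 : ℕ) (hl : 1 ≤ l) (S1 S2 : Finset ℤ)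
    (h1 : IsCCS (n1+1) S1) (h2 : IsCCS (n2+1) S2) :
    {A : ℤ → ℤ → ℤ // IsASTrap (n1+n2) l A ∧ trapCat (n1+n2) l A = ccsConcat S1 S2} ≃
    {A : ℤ → ℤ → ℤ // IsASTrap n1 l A ∧ trapCat n1 l A = S1} ×
    {A : ℤ → ℤ → ℤ // IsASTrap n2 (l+2*n1) A ∧ trapCat n2 (l+2*n1) A = S2} where
  toFun A := ⟨⟨cut1 n1 A.1, (fwd l n1 n2 hl S1 S2 h1 h2 A.1 A.2.1 A.2.2).1⟩,
              ⟨cut2 n1 A.1, (fwd l n1 n2 hl S1 S2 h1 h2 A.1 A.2.1 A.2.2).2⟩⟩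
  invFun p := ⟨stack n1 p.1.1 p.2.1,
    bwd l n1 n2 hl S1 S2 h1 h2 p.1.1 p.2.1 p.1.2.1 p.1.2.2 p.2.2.1 p.2.2.2⟩
  left_inv A := by
    ext i j
    simp only [stack, cut1, cut2]
    by_cases h : i ≤ (n1:ℤ)
    · simp [h]
    · rw [if_neg h, if_pos (by omega : (0:ℤ) < i - n1)]
      norm_num
  right_inv p := by
    obtain ⟨⟨A1, hA1⟩, ⟨A2, hA2⟩⟩ := p
    refine Prod.ext (Subtype.ext ?_) (Subtype.ext ?_)
    · ext i j
      simp only [cut1, stack]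
      by_cases h : i ≤ (n1:ℤ)
      · simp [h]
      · rw [if_neg h]
        by_contra hc
        have := (hA1.1.1 i j (Ne.symm hc)).2.1
        omega
    · ext i j
      simp only [cut2, stack]
      by_cases h : 0 < i
      · rw [if_pos h, if_neg (by omega)]
        congr 1 <;> ring
      · rw [if_neg h]
        by_contra hc
        have := (hA2.1.1 i j (Ne.symm hc)).1
        omega

/-- Multiplicativity of the weight function:
`w_l(S1 ∘ S2) = w_l(S1) · w_{l+2|S1|-2}(S2)`. -/
theorem stmt13 (l : ℕ) (hl : 1 ≤ l) (S1 S2 : Finset ℤ)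
    (h1 : IsCCS S1.card S1) (h2 : IsCCS S2.card S2) :
    wS ((ccsConcat S1 S2).card - 1) l (ccsConcat S1 S2)
      = wS (S1.card - 1) l S1 * wS (S2.card - 1) (l + 2 * S1.card - 2) S2 := by
  have hc1 : 1 ≤ S1.card := Finset.card_pos.mpr ⟨0, ccs_zero_mem h1⟩
  have hc2 : 1 ≤ S2.card := Finset.card_pos.mpr ⟨0, ccs_zero_mem h2⟩
  set n1 := S1.card - 1 with hn1
  set n2 := S2.card - 1 with hn2
  have e1 : S1.card = n1 + 1 := by omega
  have e2 : S2.card = n2 + 1 := by omega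
  have h1' : IsCCS (n1+1) S1 := e1 ▸ h1
  have h2' : IsCCS (n2+1) S2 := e2 ▸ h2
  have hcc : (ccsConcat S1 S2).card - 1 = n1 + n2 := by
    rw [concat_card h1' h2']; omega
  have hl2 : l + 2 * S1.card - 2 = l + 2 * n1 := by omega
  rw [hcc, hl2]
  unfold wS
  rw [Nat.card_congr (splitEquiv l n1 n2 hl S1 S2 h1' h2'), Nat.card_prod]
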